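/- arXiv:1811.08979 — 4 statements merged into one kernel-verified Lean document; each statement's English description precedes it below -/
import Mathlib

section
/- (Eckart–Young–Mirsky, Frobenius norm) Let A ∈ ℝ^{m×n} have singular value decomposition A = Σᵢ σᵢ uᵢvᵢᵀ with σ₁ ≥ σ₂ ≥ …. Then for any matrix M of rank at most r, ‖A − M‖_F² ≥ Σ_{i>r} σᵢ², with equality attained by A_r = Σ_{i=1}^r σᵢ uᵢvᵢᵀ. -/
open Matrix Finset

/-!
Write `A = Uᵀ diag(σ) V` with `U Uᵀ = 1`, `V Vᵀ = 1`, and `‖X‖² = tr (Xᵀ X)`. A matrix of rank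
`k` factors as `M = Wᵀ G` with `W Wᵀ = 1` (`W` has `k` rows, spanning the column space of `M`),
and `‖A - Wᵀ G‖² = ‖A‖² - ‖W A‖² + ‖G - W A‖² ≥ ‖A‖² - ‖W A‖²`.
With `C = W Uᵀ` and `tᵢ = (Cᵀ C)ᵢᵢ` one has `‖W A‖² = ∑ σᵢ² tᵢ`. Bessel's inequality for the
rows of `W` gives `tᵢ ≤ 1`, and for the rows of `U` it gives `∑ tᵢ = ‖U Wᵀ‖² ≤ ‖Wᵀ‖² = k ≤ r`.
Since `σᵢ²` is nonincreasing, such weights satisfy `∑ σᵢ² tᵢ ≤ ∑_{i<r} σᵢ²`, which is the bound.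
The truncation attains it because `A - A_r = Uᵀ diag(σ · 1_{i ≥ r}) V`.
-/

theorem sum_mul_le_sum_filter_lt {N : ℕ} {s t : Fin N → ℝ} (hs : Antitone s)
    (hs0 : ∀ i, 0 ≤ s i) (ht0 : ∀ i, 0 ≤ t i) (ht1 : ∀ i, t i ≤ 1) {r : ℕ}
    (htr : ∑ i, t i ≤ r) :
    ∑ i, s i * t i ≤ ∑ i ∈ univ.filter (fun i : Fin N => (i : ℕ) < r), s i := by
  rcases lt_or_ge r N with hr | hr
  · set ρ := s ⟨r, hr⟩
    have hcard : #(univ.filter fun i : Fin N => (i : ℕ) < r) = r :=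
      calc _ = #(Iio (⟨r, hr⟩ : Fin N)) := by congr 1; ext i; simp [Fin.lt_def]
        _ = r := Fin.card_Iio _
    -- `(s i - ρ) * (t i - [i < r]) ≤ 0` for every `i`
    have hterm : ∀ i, s i * t i - (if (i : ℕ) < r then s i else 0)
        ≤ ρ * (t i - if (i : ℕ) < r then 1 else 0) := by
      intro i
      split_ifs with hi
      · have : ρ ≤ s i := hs (Fin.le_def.2 hi.le)
        nlinarith [ht1 i]
      · have : s i ≤ ρ := hs (Fin.le_def.2 (not_lt.1 hi))
        nlinarith [ht0 i]
    have hsum := Finset.sum_le_sum fun i (_ : i ∈ univ) => hterm i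
    rw [sum_sub_distrib, ← mul_sum, sum_sub_distrib, ← sum_filter, ← sum_filter, sum_const,
      hcard, nsmul_one] at hsum
    nlinarith [hs0 ⟨r, hr⟩]
  · rw [filter_true_of_mem fun i _ => i.isLt.trans_le hr]
    exact sum_le_sum fun i _ => mul_le_of_le_one_right (hs0 i) (ht1 i)

namespace Matrix

variable {ι κ m n : Type*}

theorem sum_sum_sq_eq_trace_transpose_mul [Fintype m] [Fintype n] (B : Matrix m n ℝ) :
    ∑ x, ∑ y, B x y ^ 2 = (Bᵀ * B).trace := by
  simp only [trace, diag, mul_apply, transpose_apply, sq]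
  exact Finset.sum_comm

theorem posSemidef_transpose_mul_self [Fintype m] [Fintype n] (B : Matrix m n ℝ) :
    (Bᵀ * B).PosSemidef := by
  simpa using posSemidef_conjTranspose_mul_self B

theorem of_mul_transpose_eq_one [Fintype m] [DecidableEq ι] {u : ι → m → ℝ}
    (hu : ∀ i j, ∑ x, u i x * u j x = if i = j then 1 else 0) : of u * (of u)ᵀ = 1 := by
  ext i j
  simp [mul_apply, one_apply, hu]

theorem sum_smul_vecMulVec_eq [Fintype ι] [DecidableEq ι] (d : ι → ℝ) (u : ι → m → ℝ)
    (v : ι → n → ℝ) : ∑ i, d i • vecMulVec (u i) (v i) = (of u)ᵀ * diagonal d * of v := by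
  ext x y
  simp [sum_apply, mul_apply, vecMulVec_apply, diagonal, mul_comm, mul_left_comm]

theorem transpose_mul_self_sub_transpose_mul [Fintype κ] [Fintype m] [DecidableEq κ]
    {W : Matrix κ m ℝ} (hW : W * Wᵀ = 1) (A : Matrix m n ℝ) (G : Matrix κ n ℝ) :
    (A - Wᵀ * G)ᵀ * (A - Wᵀ * G)
      = Aᵀ * A - (W * A)ᵀ * (W * A) + (G - W * A)ᵀ * (G - W * A) := by
  have hWG : (Wᵀ * G)ᵀ * (Wᵀ * G) = Gᵀ * G := by
    rw [transpose_mul, transpose_transpose, Matrix.mul_assoc, ← Matrix.mul_assoc W, hW,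
      Matrix.one_mul]
  simp only [transpose_sub, transpose_mul, transpose_transpose, Matrix.sub_mul,
    Matrix.mul_sub] at hWG ⊢
  rw [hWG]
  simp only [Matrix.mul_assoc]
  abel

theorem trace_transpose_mul_self_sub_le [Fintype κ] [Fintype m] [Fintype n] [DecidableEq κ]
    {W : Matrix κ m ℝ} (hW : W * Wᵀ = 1) (A : Matrix m n ℝ) (G : Matrix κ n ℝ) :
    (Aᵀ * A).trace - ((W * A)ᵀ * (W * A)).trace ≤ ((A - Wᵀ * G)ᵀ * (A - Wᵀ * G)).trace := by
  rw [transpose_mul_self_sub_transpose_mul hW, trace_add, trace_sub]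
  linarith [(posSemidef_transpose_mul_self (G - W * A)).trace_nonneg]

theorem transpose_mul_self_diag_le [Fintype κ] [Fintype m] [Fintype n] [DecidableEq κ]
    {W : Matrix κ m ℝ} (hW : W * Wᵀ = 1) (A : Matrix m n ℝ) (i : n) :
    ((W * A)ᵀ * (W * A)) i i ≤ (Aᵀ * A) i i := by
  have h := congrFun (congrFun (transpose_mul_self_sub_transpose_mul hW A (W * A)) i) i
  simp only [sub_self, Matrix.mul_zero, add_zero, sub_apply] at h
  linarith [(posSemidef_transpose_mul_self (A - Wᵀ * (W * A))).diag_nonneg (i := i)]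

theorem trace_transpose_mul_self_le [Fintype κ] [Fintype m] [Fintype n] [DecidableEq κ]
    {W : Matrix κ m ℝ} (hW : W * Wᵀ = 1) (A : Matrix m n ℝ) :
    ((W * A)ᵀ * (W * A)).trace ≤ (Aᵀ * A).trace :=
  Finset.sum_le_sum fun i _ => transpose_mul_self_diag_le hW A i

theorem trace_transpose_mul_self_mul_diagonal_mul [Fintype ι] [Fintype m] [Fintype n]
    [DecidableEq ι] {V : Matrix ι n ℝ} (hV : V * Vᵀ = 1) (C : Matrix m ι ℝ) (d : ι → ℝ) :
    ((C * diagonal d * V)ᵀ * (C * diagonal d * V)).trace = ∑ i, d i ^ 2 * (Cᵀ * C) i i := by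
  set B := C * diagonal d
  calc ((B * V)ᵀ * (B * V)).trace = (Vᵀ * (Bᵀ * B * V)).trace := by
        simp only [transpose_mul, Matrix.mul_assoc]
    _ = (Bᵀ * B * V * Vᵀ).trace := trace_mul_comm _ _
    _ = (Bᵀ * B).trace := by rw [Matrix.mul_assoc _ V, hV, Matrix.mul_one]
    _ = ∑ i, d i ^ 2 * (Cᵀ * C) i i := by
        rw [transpose_mul, diagonal_transpose, Matrix.mul_assoc, ← Matrix.mul_assoc Cᵀ]
        simp only [trace, diag, diagonal_mul, mul_diagonal]
        exact Finset.sum_congr rfl fun i _ => by ring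

theorem trace_transpose_mul_self_eq_sum_sq [Fintype ι] [Fintype m] [Fintype n]
    [DecidableEq ι] {U : Matrix ι m ℝ} {V : Matrix ι n ℝ} (hU : U * Uᵀ = 1) (hV : V * Vᵀ = 1)
    (d : ι → ℝ) : ((Uᵀ * diagonal d * V)ᵀ * (Uᵀ * diagonal d * V)).trace = ∑ i, d i ^ 2 := by
  rw [trace_transpose_mul_self_mul_diagonal_mul hV, transpose_transpose, hU]
  simp

theorem sum_sum_sq_sum_smul_vecMulVec [Fintype ι] [Fintype m] [Fintype n] [DecidableEq ι]
    {u : ι → m → ℝ} {v : ι → n → ℝ} (hu : of u * (of u)ᵀ = 1) (hv : of v * (of v)ᵀ = 1)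
    (s : Finset ι) (d : ι → ℝ) :
    ∑ x, ∑ y, (∑ i ∈ s, d i • vecMulVec (u i) (v i)) x y ^ 2 = ∑ i ∈ s, d i ^ 2 := by
  have hs : ∑ i ∈ s, d i • vecMulVec (u i) (v i)
      = ∑ i, (if i ∈ s then d i else 0) • vecMulVec (u i) (v i) := by
    simp only [ite_smul, zero_smul, sum_ite_mem, univ_inter]
  rw [hs, sum_sum_sq_eq_trace_transpose_mul, sum_smul_vecMulVec_eq,
    trace_transpose_mul_self_eq_sum_sq hu hv]
  simp [ite_pow, sum_ite_mem]

theorem trace_transpose_mul_self_mul_le_sum_filter_lt [Fintype κ] [Fintype m] [Fintype n]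
    [DecidableEq κ] {N r : ℕ} {U : Matrix (Fin N) m ℝ} {V : Matrix (Fin N) n ℝ}
    (hU : U * Uᵀ = 1) (hV : V * Vᵀ = 1) {σ : Fin N → ℝ} (hσ0 : ∀ i, 0 ≤ σ i) (hσ : Antitone σ)
    {W : Matrix κ m ℝ} (hW : W * Wᵀ = 1) (hκ : Fintype.card κ ≤ r) :
    ((W * (Uᵀ * diagonal σ * V))ᵀ * (W * (Uᵀ * diagonal σ * V))).trace
      ≤ ∑ i ∈ univ.filter (fun i : Fin N => (i : ℕ) < r), σ i ^ 2 := by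
  set C := W * Uᵀ
  have ht1 : ∀ i, (Cᵀ * C) i i ≤ 1 := fun i =>
    (transpose_mul_self_diag_le hW Uᵀ i).trans_eq (by simp [hU])
  have htr : ∑ i, (Cᵀ * C) i i ≤ r :=
    calc ∑ i, (Cᵀ * C) i i = (C * Cᵀ).trace := trace_mul_comm _ _
      _ = ((U * Wᵀ)ᵀ * (U * Wᵀ)).trace := by simp [C, transpose_mul, Matrix.mul_assoc]
      _ ≤ (Wᵀᵀ * Wᵀ).trace := trace_transpose_mul_self_le hU Wᵀ
      _ ≤ r := by simpa [hW] using hκ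
  have hσsq : Antitone fun i => σ i ^ 2 := fun _ _ hij => pow_le_pow_left₀ (hσ0 _) (hσ hij) 2
  rw [show W * (Uᵀ * diagonal σ * V) = C * diagonal σ * V by simp only [C, Matrix.mul_assoc],
    trace_transpose_mul_self_mul_diagonal_mul hV]
  exact sum_mul_le_sum_filter_lt hσsq (fun i => sq_nonneg _)
    (fun i => (posSemidef_transpose_mul_self C).diag_nonneg) ht1 htr

theorem exists_mul_transpose_eq_one_and_eq_transpose_mul [Fintype m] [Fintype n]
    [DecidableEq n] (M : Matrix m n ℝ) :
    ∃ (W : Matrix (Fin M.rank) m ℝ) (G : Matrix (Fin M.rank) n ℝ),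
      W * Wᵀ = 1 ∧ M = Wᵀ * G := by
  let K := LinearMap.range (toEuclideanLin M)
  have hK : Module.finrank ℝ K = M.rank := by
    rw [rank_eq_finrank_range_toLin M (EuclideanSpace.basisFun m ℝ).toBasis
      (EuclideanSpace.basisFun n ℝ).toBasis, ← toEuclideanLin_eq_toLin_orthonormal]
  let b := (stdOrthonormalBasis ℝ K).reindex (finCongr hK)
  have hcol : ∀ y, toEuclideanLin M (EuclideanSpace.single y 1) ∈ K :=
    fun y => LinearMap.mem_range_self _ _
  refine ⟨of fun j x => (b j : EuclideanSpace ℝ m) x,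
    of fun j y => b.repr ⟨_, hcol y⟩ j, ?_, ?_⟩
  · ext i j
    have := orthonormal_iff_ite.1 b.orthonormal i j
    rw [Submodule.coe_inner, PiLp.inner_apply] at this
    simp only [RCLike.inner_apply, conj_trivial] at this
    simp only [mul_apply, one_apply, transpose_apply, of_apply]
    rw [← this]
    exact Finset.sum_congr rfl fun _ _ => mul_comm _ _
  · ext x y
    have := congrArg (fun z : K => (z : EuclideanSpace ℝ m) x) (b.sum_repr ⟨_, hcol y⟩)
    simp only [Submodule.coe_sum, SetLike.val_smul, WithLp.ofLp_sum, Finset.sum_apply,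
      PiLp.smul_apply, smul_eq_mul, ofLp_toLpLin] at this
    simpa [mul_apply, mul_comm] using this.symm

end Matrix

theorem eckart_young_mirsky_general
    {m n : Type*} [Fintype m] [Fintype n] [DecidableEq n]
    {N : ℕ} (σ : Fin N → ℝ) (u : Fin N → m → ℝ) (v : Fin N → n → ℝ)
    (hσ0 : ∀ i, 0 ≤ σ i) (hσmono : Antitone σ)
    (hu : ∀ i j, (∑ x, u i x * u j x) = if i = j then 1 else 0)
    (hv : ∀ i j, (∑ y, v i y * v j y) = if i = j then 1 else 0)
    (A : Matrix m n ℝ) (hA : A = ∑ i, σ i • vecMulVec (u i) (v i)) (r : ℕ) :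
    (∀ M : Matrix m n ℝ, M.rank ≤ r →
        (∑ i ∈ univ.filter (fun i : Fin N => r ≤ (i : ℕ)), σ i ^ 2)
          ≤ ∑ x, ∑ y, (A x y - M x y) ^ 2) ∧
    (∑ x, ∑ y,
        (A x y - (∑ i ∈ univ.filter (fun i : Fin N => (i : ℕ) < r),
          σ i • vecMulVec (u i) (v i)) x y) ^ 2
      = ∑ i ∈ univ.filter (fun i : Fin N => r ≤ (i : ℕ)), σ i ^ 2) := by
  have hU := of_mul_transpose_eq_one hu
  have hV := of_mul_transpose_eq_one hv
  have hsplit := sum_filter_add_sum_filter_not univ (fun i : Fin N => (i : ℕ) < r) (σ · ^ 2)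
  simp only [not_lt] at hsplit
  constructor
  · intro M hM
    obtain ⟨W, G, hW, hMWG⟩ := exists_mul_transpose_eq_one_and_eq_transpose_mul M
    have hA' := hA.trans (sum_smul_vecMulVec_eq σ u v)
    calc _ ≤ (Aᵀ * A).trace - ((W * A)ᵀ * (W * A)).trace := by
          rw [hA', trace_transpose_mul_self_eq_sum_sq hU hV]
          linarith [trace_transpose_mul_self_mul_le_sum_filter_lt hU hV hσ0 hσmono hW
            (by simpa using hM)]
      _ ≤ ((A - Wᵀ * G)ᵀ * (A - Wᵀ * G)).trace := trace_transpose_mul_self_sub_le hW A G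
      _ = _ := by rw [← sum_sum_sq_eq_trace_transpose_mul, ← hMWG]; rfl
  · have htail :
        A - ∑ i ∈ univ.filter (fun i : Fin N => (i : ℕ) < r), σ i • vecMulVec (u i) (v i)
          = ∑ i ∈ univ.filter (fun i : Fin N => r ≤ (i : ℕ)), σ i • vecMulVec (u i) (v i) := by
      rw [hA, ← sum_filter_add_sum_filter_not univ (fun i : Fin N => (i : ℕ) < r),
        add_sub_cancel_left]
      simp only [not_lt]
    rw [← sum_sum_sq_sum_smul_vecMulVec hU hV, ← htail]
    rfl

/-- Eckart–Young–Mirsky, Frobenius norm: if `A = ∑ i, σ i • uᵢ vᵢᵀ` with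
`σ` nonincreasing and nonnegative and `uᵢ`, `vᵢ` orthonormal families, then every matrix `M`
of rank at most `r` satisfies `‖A - M‖_F² ≥ ∑_{i ≥ r} σᵢ²`, with equality attained by the
rank-`r` truncation `A_r = ∑_{i < r} σᵢ uᵢ vᵢᵀ`. -/
theorem eckart_young_mirsky
    {m n : Type*} [Fintype m] [Fintype n] [DecidableEq m] [DecidableEq n]
    {N : ℕ} (σ : Fin N → ℝ) (u : Fin N → m → ℝ) (v : Fin N → n → ℝ)
    (hσ0 : ∀ i, 0 ≤ σ i) (hσmono : Antitone σ)
    (hu : ∀ i j, (∑ x, u i x * u j x) = if i = j then 1 else 0)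
    (hv : ∀ i j, (∑ y, v i y * v j y) = if i = j then 1 else 0)
    (A : Matrix m n ℝ) (hA : A = ∑ i, σ i • vecMulVec (u i) (v i)) (r : ℕ) :
    (∀ M : Matrix m n ℝ, M.rank ≤ r →
        (∑ i ∈ univ.filter (fun i : Fin N => r ≤ (i : ℕ)), σ i ^ 2)
          ≤ ∑ x, ∑ y, (A x y - M x y) ^ 2) ∧
    (∑ x, ∑ y,
        (A x y - (∑ i ∈ univ.filter (fun i : Fin N => (i : ℕ) < r),
          σ i • vecMulVec (u i) (v i)) x y) ^ 2
      = ∑ i ∈ univ.filter (fun i : Fin N => r ≤ (i : ℕ)), σ i ^ 2) :=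
  eckart_young_mirsky_general σ u v hσ0 hσmono hu hv A hA r
end

section
/- For zero-mean feature maps f : 𝒳 → ℝᵏ and g : 𝒴 → ℝᵏ (E[f(X)] = E[g(Y)] = 0), minimizing (1/2)‖B̃ − ΦΨᵀ‖_F² over f, g is equivalent to maximizing the Soft-HGR objective E[f(X)ᵀg(Y)] − (1/2)tr(Cov(f(X))·Cov(g(Y))); precisely, (1/2)‖B̃ − ΦΨᵀ‖_F² = (1/2)‖B̃‖_F² − [E[f(X)ᵀg(Y)] − (1/2)tr(Cov(f(X))Cov(g(Y)))]. -/
open Matrix Finset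

lemma sum_swap4 {ι₁ ι₂ ι₃ ι₄ : Type*} [Fintype ι₁] [Fintype ι₂] [Fintype ι₃] [Fintype ι₄]
    (F : ι₁ → ι₂ → ι₃ → ι₄ → ℝ) :
    ∑ a, ∑ b, ∑ c, ∑ d, F a b c d = ∑ c, ∑ d, ∑ a, ∑ b, F a b c d := by
  calc ∑ a, ∑ b, ∑ c, ∑ d, F a b c d
      = ∑ a, ∑ c, ∑ b, ∑ d, F a b c d :=
        Finset.sum_congr rfl fun a _ => Finset.sum_comm
    _ = ∑ c, ∑ a, ∑ b, ∑ d, F a b c d := Finset.sum_comm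
    _ = ∑ c, ∑ a, ∑ d, ∑ b, F a b c d :=
        Finset.sum_congr rfl fun c _ => Finset.sum_congr rfl fun a _ => Finset.sum_comm
    _ = ∑ c, ∑ d, ∑ a, ∑ b, F a b c d :=
        Finset.sum_congr rfl fun c _ => Finset.sum_comm

/-- For zero-mean feature maps `f`, `g`,
`(1/2)‖B̃ - ΦΨᵀ‖_F² = (1/2)‖B̃‖_F² - (E[f(X)ᵀ g(Y)] - (1/2) tr(Cov(f(X)) Cov(g(Y))))`,
so minimizing the low-rank approximation error is equivalent to maximizing the Soft-HGR
objective.  Here `Cov(f(X)) = ∑ x, P_X(x) f(x) f(x)ᵀ` (since `E[f(X)] = 0`), etc. -/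
theorem low_rank_approx_eq_soft_hgr
    {X Y : Type*} [Fintype X] [Fintype Y] {k : ℕ}
    (p : X → Y → ℝ) (hp : ∀ x y, 0 ≤ p x y) (hsum : ∑ x, ∑ y, p x y = 1)
    (hX : ∀ x, 0 < ∑ y, p x y) (hY : ∀ y, 0 < ∑ x, p x y)
    (B : Matrix X Y ℝ)
    (hB : ∀ x y, B x y = p x y / (Real.sqrt (∑ y', p x y') * Real.sqrt (∑ x', p x' y)))
    (u₀ : X → ℝ) (hu : ∀ x, u₀ x = Real.sqrt (∑ y, p x y))
    (v₀ : Y → ℝ) (hv : ∀ y, v₀ y = Real.sqrt (∑ x, p x y))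
    (Btil : Matrix X Y ℝ) (hBtil : Btil = B - vecMulVec u₀ v₀)
    (f : X → Fin k → ℝ) (g : Y → Fin k → ℝ)
    (hf0 : ∀ i, ∑ x, (∑ y, p x y) * f x i = 0)
    (hg0 : ∀ i, ∑ y, (∑ x, p x y) * g y i = 0)
    (Φ : Matrix X (Fin k) ℝ) (hΦ : ∀ x i, Φ x i = Real.sqrt (∑ y, p x y) * f x i)
    (Ψ : Matrix Y (Fin k) ℝ) (hΨ : ∀ y i, Ψ y i = Real.sqrt (∑ x, p x y) * g y i)
    (Covf : Matrix (Fin k) (Fin k) ℝ)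
    (hCovf : ∀ i j, Covf i j = ∑ x, (∑ y, p x y) * (f x i * f x j))
    (Covg : Matrix (Fin k) (Fin k) ℝ)
    (hCovg : ∀ i j, Covg i j = ∑ y, (∑ x, p x y) * (g y i * g y j)) :
    (1 / 2 : ℝ) * ∑ x, ∑ y, (Btil x y - (Φ * Ψᵀ) x y) ^ 2
      = (1 / 2 : ℝ) * (∑ x, ∑ y, (Btil x y) ^ 2)
        - ((∑ x, ∑ y, p x y * (∑ i, f x i * g y i))
            - (1 / 2 : ℝ) * (Covf * Covg).trace) := by
  set M := Φ * Ψᵀ with hM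
  have hMxy : ∀ x y, M x y =
      Real.sqrt (∑ y', p x y') * Real.sqrt (∑ x', p x' y) * ∑ i, f x i * g y i := by
    intro x y
    rw [hM, Matrix.mul_apply, Finset.mul_sum]
    refine Finset.sum_congr rfl fun i _ => ?_
    simp [Matrix.transpose_apply, hΦ, hΨ]
    ring
  -- cross term
  have hsq : ∀ (x : X) (_ : Y), Real.sqrt (∑ y', p x y') * Real.sqrt (∑ y', p x y') = ∑ y', p x y' :=
    fun x y => Real.mul_self_sqrt (le_of_lt (hX x))
  have hsq' : ∀ y, Real.sqrt (∑ x', p x' y) * Real.sqrt (∑ x', p x' y) = ∑ x', p x' y :=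
    fun y => Real.mul_self_sqrt (le_of_lt (hY y))
  have key1 : ∀ x y, Btil x y * M x y
      = p x y * (∑ i, f x i * g y i)
        - (∑ y', p x y') * (∑ x', p x' y) * (∑ i, f x i * g y i) := by
    intro x y
    have hx0 : Real.sqrt (∑ y', p x y') ≠ 0 :=
      ne_of_gt (Real.sqrt_pos.mpr (hX x))
    have hy0 : Real.sqrt (∑ x', p x' y) ≠ 0 :=
      ne_of_gt (Real.sqrt_pos.mpr (hY y))
    rw [hBtil, Matrix.sub_apply, Matrix.vecMulVec_apply, hMxy, hB, hu, hv, sub_mul]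
    have h1 : p x y / (Real.sqrt (∑ y', p x y') * Real.sqrt (∑ x', p x' y)) *
        (Real.sqrt (∑ y', p x y') * Real.sqrt (∑ x', p x' y) * ∑ i, f x i * g y i)
        = p x y * ∑ i, f x i * g y i := by
      field_simp
    rw [h1]
    congr 1
    calc Real.sqrt (∑ y', p x y') * Real.sqrt (∑ x', p x' y) *
        (Real.sqrt (∑ y', p x y') * Real.sqrt (∑ x', p x' y) * ∑ i, f x i * g y i)
        = (Real.sqrt (∑ y', p x y') * Real.sqrt (∑ y', p x y')) *
          ((Real.sqrt (∑ x', p x' y) * Real.sqrt (∑ x', p x' y)) * ∑ i, f x i * g y i) := by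
          ring
      _ = (∑ y', p x y') * (∑ x', p x' y) * (∑ i, f x i * g y i) := by
          rw [hsq x y, hsq' y]; ring
  have inner0 : ∀ x, ∑ y, (∑ x', p x' y) * (∑ i, f x i * g y i) = 0 := by
    intro x
    have : ∑ y, (∑ x', p x' y) * (∑ i, f x i * g y i)
        = ∑ i, f x i * (∑ y, (∑ x', p x' y) * g y i) := by
      simp_rw [Finset.mul_sum]
      rw [Finset.sum_comm]
      refine Finset.sum_congr rfl fun i _ => ?_
      exact Finset.sum_congr rfl fun y _ => by ring
    rw [this]
    simp [hg0]
  have cross : ∑ x, ∑ y, Btil x y * M x y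
      = ∑ x, ∑ y, p x y * (∑ i, f x i * g y i) := by
    simp_rw [key1, Finset.sum_sub_distrib]
    have : ∑ x, ∑ y, (∑ y', p x y') * (∑ x', p x' y) * (∑ i, f x i * g y i) = 0 := by
      refine Finset.sum_eq_zero fun x _ => ?_
      have : ∑ y, (∑ y', p x y') * (∑ x', p x' y) * (∑ i, f x i * g y i)
          = (∑ y', p x y') * ∑ y, (∑ x', p x' y) * (∑ i, f x i * g y i) := by
        rw [Finset.mul_sum]
        exact Finset.sum_congr rfl fun y _ => by ring
      rw [this, inner0, mul_zero]
    rw [this, sub_zero]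
  -- quadratic term
  have quad : ∑ x, ∑ y, (M x y) ^ 2 = (Covf * Covg).trace := by
    have lhs : ∑ x, ∑ y, (M x y) ^ 2
        = ∑ x, ∑ y, ∑ i, ∑ j,
            ((∑ y', p x y') * (f x i * f x j)) * ((∑ x', p x' y) * (g y i * g y j)) := by
      refine Finset.sum_congr rfl fun x _ => Finset.sum_congr rfl fun y _ => ?_
      rw [hMxy, pow_two]
      have e : (∑ i, f x i * g y i) * (∑ j, f x j * g y j)
          = ∑ i, ∑ j, (f x i * g y i) * (f x j * g y j) := Finset.sum_mul_sum _ _ _ _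
      calc (Real.sqrt (∑ y', p x y') * Real.sqrt (∑ x', p x' y) * ∑ i, f x i * g y i) *
          (Real.sqrt (∑ y', p x y') * Real.sqrt (∑ x', p x' y) * ∑ i, f x i * g y i)
          = (Real.sqrt (∑ y', p x y') * Real.sqrt (∑ y', p x y')) *
            ((Real.sqrt (∑ x', p x' y) * Real.sqrt (∑ x', p x' y)) *
              ((∑ i, f x i * g y i) * (∑ j, f x j * g y j))) := by ring
        _ = ((∑ y', p x y') * (∑ x', p x' y)) *
            ((∑ i, f x i * g y i) * (∑ j, f x j * g y j)) := by
            rw [hsq x y, hsq' y]; ring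
        _ = ∑ i, ∑ j, ((∑ y', p x y') * (f x i * f x j)) * ((∑ x', p x' y) * (g y i * g y j)) := by
            rw [e, Finset.mul_sum]
            refine Finset.sum_congr rfl fun i _ => ?_
            rw [Finset.mul_sum]
            exact Finset.sum_congr rfl fun j _ => by ring
    rw [lhs, sum_swap4]
    rw [Matrix.trace]
    refine Finset.sum_congr rfl fun i _ => ?_
    rw [Matrix.diag_apply, Matrix.mul_apply]
    refine Finset.sum_congr rfl fun j _ => ?_
    rw [hCovf, hCovg]
    rw [Finset.sum_mul_sum _ _ (fun x => (∑ y, p x y) * (f x i * f x j))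
      (fun y => (∑ x, p x y) * (g y j * g y i))]
    refine Finset.sum_congr rfl fun x _ => ?_
    refine Finset.sum_congr rfl fun y _ => by ring
  -- expand square
  have expand : ∑ x, ∑ y, (Btil x y - M x y) ^ 2
      = (∑ x, ∑ y, (Btil x y) ^ 2) - 2 * (∑ x, ∑ y, Btil x y * M x y)
        + ∑ x, ∑ y, (M x y) ^ 2 := by
    have h2 : ∑ x, ∑ y, 2 * Btil x y * M x y = 2 * ∑ x, ∑ y, Btil x y * M x y := by
      rw [Finset.mul_sum]
      refine Finset.sum_congr rfl fun x _ => ?_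
      rw [Finset.mul_sum]
      exact Finset.sum_congr rfl fun y _ => by ring
    simp_rw [sub_sq, Finset.sum_add_distrib, Finset.sum_sub_distrib]
    rw [h2]
  rw [expand, cross, quad]
  ring
end

section
/- For the HGR maximal correlation with k features, if f and g satisfy the constraints (zero mean and identity covariance), then E[f(X)ᵀg(Y)] ≤ k. More generally, E[f(X)ᵀg(Y)] ≤ Σ_{i=1}^k σᵢ where σ₁ ≥ σ₂ ≥ … are the singular values of B̃ = B − u₀v₀ᵀ. -/
open Matrix Finset

/-- Bessel's inequality for a finite orthonormal family given by sums. -/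
lemma bessel_sum {ι α : Type*} [Fintype ι] [DecidableEq ι] [Fintype α] (e : ι → α → ℝ)
    (hON : ∀ i j, (∑ x, e i x * e j x) = if i = j then 1 else 0)
    (w : α → ℝ) :
    ∑ i, (∑ x, e i x * w x) ^ 2 ≤ ∑ x, w x ^ 2 := by
  have key : (0:ℝ) ≤ ∑ x, (w x - ∑ i, (∑ x', e i x' * w x') * e i x) ^ 2 :=
    Finset.sum_nonneg fun x _ => sq_nonneg _
  have h1 : ∑ x, w x * (∑ i, (∑ x', e i x' * w x') * e i x)
      = ∑ i, (∑ x', e i x' * w x') ^ 2 := by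
    simp_rw [Finset.mul_sum]
    rw [Finset.sum_comm]
    refine Finset.sum_congr rfl fun i _ => ?_
    have h : ∀ x, w x * ((∑ x', e i x' * w x') * e i x)
        = (∑ x', e i x' * w x') * (e i x * w x) := fun x => by ring
    simp_rw [h, ← Finset.mul_sum, sq]
  have h2 : ∑ x, (∑ i, (∑ x', e i x' * w x') * e i x) ^ 2
      = ∑ i, (∑ x', e i x' * w x') ^ 2 := by
    have hx : ∀ x, (∑ i, (∑ x', e i x' * w x') * e i x) ^ 2
        = ∑ i, ∑ j, ((∑ x', e i x' * w x') * e i x)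
            * ((∑ x', e j x' * w x') * e j x) := fun x => by
      rw [sq, Finset.sum_mul_sum]
    simp_rw [hx]
    rw [Finset.sum_comm]
    refine Finset.sum_congr rfl fun i _ => ?_
    rw [Finset.sum_comm]
    have hj : ∀ j : ι, (∑ x, ((∑ x', e i x' * w x') * e i x) * ((∑ x', e j x' * w x') * e j x))
        = (∑ x', e i x' * w x') * (∑ x', e j x' * w x') * (if i = j then 1 else 0) := by
      intro j
      rw [← hON i j, Finset.mul_sum]
      exact Finset.sum_congr rfl fun x _ => by ring
    simp_rw [hj]
    simp [mul_ite, sq]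
  have expand : ∑ x, (w x - ∑ i, (∑ x', e i x' * w x') * e i x) ^ 2
      = (∑ x, w x ^ 2) - ∑ i, (∑ x', e i x' * w x') ^ 2 := by
    have h : ∀ x, (w x - ∑ i, (∑ x', e i x' * w x') * e i x) ^ 2
        = w x ^ 2 - 2 * (w x * (∑ i, (∑ x', e i x' * w x') * e i x))
          + (∑ i, (∑ x', e i x' * w x') * e i x) ^ 2 := fun x => by ring
    simp_rw [h]
    rw [Finset.sum_add_distrib, Finset.sum_sub_distrib, ← Finset.mul_sum, h1, h2]
    ring
  rw [expand] at key
  linarith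

/-- Rearrangement-style bound. -/
lemma rearrange_bound {N k : ℕ} (σ w : Fin N → ℝ) (hσ0 : ∀ i, 0 ≤ σ i)
    (hmono : Antitone σ) (hw0 : ∀ i, 0 ≤ w i) (hw1 : ∀ i, w i ≤ 1)
    (hwk : ∑ i, w i ≤ (k : ℝ)) :
    ∑ i, σ i * w i ≤ ∑ i ∈ univ.filter (fun i : Fin N => (i : ℕ) < k), σ i := by
  classical
  by_cases hNk : N ≤ k
  · have hall : univ.filter (fun i : Fin N => (i : ℕ) < k) = univ := by
      ext i; simp [lt_of_lt_of_le i.isLt hNk]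
    rw [hall]
    exact Finset.sum_le_sum fun i _ => mul_le_of_le_one_right (hσ0 i) (hw1 i)
  · push_neg at hNk
    set m : Fin N := ⟨k, hNk⟩ with hm
    set S : Finset (Fin N) := univ.filter (fun i : Fin N => (i : ℕ) < k) with hS
    have hScard : S.card = k := by
      have himg : S = Finset.map (Fin.castLEEmb hNk.le) Finset.univ := by
        ext i
        simp only [hS, Finset.mem_filter, Finset.mem_univ, true_and, Finset.mem_map,
          Fin.castLEEmb, Function.Embedding.coeFn_mk]
        constructor
        · intro h; exact ⟨⟨i, h⟩, by simp [Fin.castLE]⟩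
        · rintro ⟨j, rfl⟩; exact j.isLt
      rw [himg, Finset.card_map, Finset.card_univ, Fintype.card_fin]
    have hsplit : ∑ i ∈ S, σ i * w i + ∑ i ∈ univ.filter (fun i : Fin N => ¬ ((i:ℕ) < k)), σ i * w i
        = ∑ i, σ i * w i := Finset.sum_filter_add_sum_filter_not _ _ _
    have hwsplit : ∑ i ∈ S, w i + ∑ i ∈ univ.filter (fun i : Fin N => ¬ ((i:ℕ) < k)), w i
        = ∑ i, w i := Finset.sum_filter_add_sum_filter_not _ _ _
    have hT : ∑ i ∈ univ.filter (fun i : Fin N => ¬ ((i:ℕ) < k)), σ i * w i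
        ≤ σ m * ∑ i ∈ univ.filter (fun i : Fin N => ¬ ((i:ℕ) < k)), w i := by
      rw [Finset.mul_sum]
      refine Finset.sum_le_sum fun i hi => ?_
      have hik : ¬ ((i:ℕ) < k) := by simpa using hi
      have hmi : σ i ≤ σ m := hmono (by simpa [Fin.le_def, hm] using le_of_not_gt hik)
      exact mul_le_mul_of_nonneg_right hmi (hw0 i)
    have h2 : σ m * ∑ i ∈ univ.filter (fun i : Fin N => ¬ ((i:ℕ) < k)), w i
        ≤ σ m * ((k : ℝ) - ∑ i ∈ S, w i) := by
      apply mul_le_mul_of_nonneg_left _ (hσ0 m)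
      linarith
    have h3 : σ m * ((k : ℝ) - ∑ i ∈ S, w i) = ∑ i ∈ S, σ m * (1 - w i) := by
      have h : ∑ i ∈ S, σ m * (1 - w i) = ∑ i ∈ S, (σ m - σ m * w i) :=
        Finset.sum_congr rfl fun i _ => by ring
      rw [h, Finset.sum_sub_distrib, Finset.sum_const, hScard, nsmul_eq_mul, ← Finset.mul_sum]
      ring
    have h4 : ∑ i ∈ S, σ m * (1 - w i) ≤ ∑ i ∈ S, σ i * (1 - w i) := by
      refine Finset.sum_le_sum fun i hi => ?_
      have hik : (i:ℕ) < k := by simpa [hS] using hi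
      have : σ m ≤ σ i := hmono (by simpa [Fin.le_def, hm] using hik.le)
      have := hw1 i
      nlinarith
    have h5 : ∑ i ∈ S, σ i * w i + ∑ i ∈ S, σ i * (1 - w i) = ∑ i ∈ S, σ i := by
      rw [← Finset.sum_add_distrib]
      exact Finset.sum_congr rfl fun i _ => by ring
    linarith

/-- If `f`, `g` are zero-mean with identity covariance, then
`E[f(X)ᵀ g(Y)] ≤ k`, and more generally `E[f(X)ᵀ g(Y)] ≤ ∑_{i=1}^k σᵢ` where the `σᵢ` are
the (nonincreasingly ordered) singular values of `B̃ = B - u₀v₀ᵀ`, given here through an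
orthonormal singular value decomposition of `B̃`. -/
theorem hgr_correlation_upper_bounds
    {X Y : Type*} [Fintype X] [Fintype Y] {k N : ℕ}
    (p : X → Y → ℝ) (hp : ∀ x y, 0 ≤ p x y) (hsum : ∑ x, ∑ y, p x y = 1)
    (hX : ∀ x, 0 < ∑ y, p x y) (hY : ∀ y, 0 < ∑ x, p x y)
    (B : Matrix X Y ℝ)
    (hB : ∀ x y, B x y = p x y / (Real.sqrt (∑ y', p x y') * Real.sqrt (∑ x', p x' y)))
    (u₀ : X → ℝ) (hu : ∀ x, u₀ x = Real.sqrt (∑ y, p x y))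
    (v₀ : Y → ℝ) (hv : ∀ y, v₀ y = Real.sqrt (∑ x, p x y))
    (σ : Fin N → ℝ) (u : Fin N → X → ℝ) (v : Fin N → Y → ℝ)
    (hσ0 : ∀ i, 0 ≤ σ i) (hσmono : Antitone σ)
    (hON_u : ∀ i j, (∑ x, u i x * u j x) = if i = j then 1 else 0)
    (hON_v : ∀ i j, (∑ y, v i y * v j y) = if i = j then 1 else 0)
    (hSVD : B - vecMulVec u₀ v₀ = ∑ i, σ i • vecMulVec (u i) (v i))
    (f : X → Fin k → ℝ) (g : Y → Fin k → ℝ)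
    (hf0 : ∀ i, ∑ x, (∑ y, p x y) * f x i = 0)
    (hg0 : ∀ i, ∑ y, (∑ x, p x y) * g y i = 0)
    (hfcov : ∀ i j, (∑ x, (∑ y, p x y) * (f x i * f x j)) = if i = j then 1 else 0)
    (hgcov : ∀ i j, (∑ y, (∑ x, p x y) * (g y i * g y j)) = if i = j then 1 else 0) :
    (∑ x, ∑ y, p x y * (∑ i, f x i * g y i)) ≤ (k : ℝ) ∧
    (∑ x, ∑ y, p x y * (∑ i, f x i * g y i))
      ≤ ∑ i ∈ univ.filter (fun i : Fin N => (i : ℕ) < k), σ i := by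
  classical
  -- whitened feature vectors
  set F : Fin k → X → ℝ := fun i x => Real.sqrt (∑ y, p x y) * f x i with hF
  set G : Fin k → Y → ℝ := fun i y => Real.sqrt (∑ x, p x y) * g y i with hG
  have hFON : ∀ i j, (∑ x, F i x * F j x) = if i = j then 1 else 0 := by
    intro i j
    rw [← hfcov i j]
    refine Finset.sum_congr rfl fun x _ => ?_
    simp only [hF]
    rw [show Real.sqrt (∑ y, p x y) * f x i * (Real.sqrt (∑ y, p x y) * f x j)
        = Real.sqrt (∑ y, p x y) * Real.sqrt (∑ y, p x y) * (f x i * f x j) from by ring,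
      Real.mul_self_sqrt (hX x).le]
  have hGON : ∀ i j, (∑ y, G i y * G j y) = if i = j then 1 else 0 := by
    intro i j
    rw [← hgcov i j]
    refine Finset.sum_congr rfl fun y _ => ?_
    simp only [hG]
    rw [show Real.sqrt (∑ x, p x y) * g y i * (Real.sqrt (∑ x, p x y) * g y j)
        = Real.sqrt (∑ x, p x y) * Real.sqrt (∑ x, p x y) * (g y i * g y j) from by ring,
      Real.mul_self_sqrt (hY y).le]
  have hFu : ∀ i, (∑ x, F i x * u₀ x) = 0 := by
    intro i
    rw [← hf0 i]
    refine Finset.sum_congr rfl fun x _ => ?_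
    simp only [hF, hu x]
    rw [show Real.sqrt (∑ y, p x y) * f x i * Real.sqrt (∑ y, p x y)
        = Real.sqrt (∑ y, p x y) * Real.sqrt (∑ y, p x y) * f x i from by ring,
      Real.mul_self_sqrt (hX x).le]
  have hpB : ∀ x y, p x y
      = Real.sqrt (∑ y', p x y') * Real.sqrt (∑ x', p x' y) * B x y := by
    intro x y
    have hne : Real.sqrt (∑ y', p x y') * Real.sqrt (∑ x', p x' y) ≠ 0 :=
      ne_of_gt (mul_pos (Real.sqrt_pos.2 (hX x)) (Real.sqrt_pos.2 (hY y)))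
    rw [hB x y, mul_comm, div_mul_cancel₀ _ hne]
  have hBpt : ∀ x y, B x y = u₀ x * v₀ y + ∑ n, σ n * (u n x * v n y) := by
    intro x y
    have h := congrFun (congrFun hSVD x) y
    simp only [Matrix.sub_apply, Matrix.vecMulVec_apply, Matrix.sum_apply,
      Matrix.smul_apply, smul_eq_mul] at h
    linarith
  -- expectation as sum over features
  have hEsum : (∑ x, ∑ y, p x y * (∑ i, f x i * g y i))
      = ∑ i : Fin k, ∑ x, ∑ y, p x y * (f x i * g y i) := by
    simp_rw [Finset.mul_sum]
    have h : ∀ x : X, (∑ y, ∑ i, p x y * (f x i * g y i))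
        = ∑ i, ∑ y, p x y * (f x i * g y i) := fun _ => Finset.sum_comm
    simp_rw [h]
    exact Finset.sum_comm
  -- Part 1: per-feature Cauchy-Schwarz with weights p
  have hT : ∀ i, (∑ x, ∑ y, p x y * (f x i * g y i)) ≤ 1 := by
    intro i
    have h1 : ∑ q : X × Y, (Real.sqrt (p q.1 q.2) * f q.1 i)
          * (Real.sqrt (p q.1 q.2) * g q.2 i)
        = ∑ x, ∑ y, p x y * (f x i * g y i) := by
      rw [← Finset.univ_product_univ, Finset.sum_product]
      refine Finset.sum_congr rfl fun x _ => Finset.sum_congr rfl fun y _ => ?_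
      rw [show Real.sqrt (p x y) * f x i * (Real.sqrt (p x y) * g y i)
          = Real.sqrt (p x y) * Real.sqrt (p x y) * (f x i * g y i) from by ring,
        Real.mul_self_sqrt (hp x y)]
    have h2 := Real.sum_mul_le_sqrt_mul_sqrt Finset.univ
      (fun q : X × Y => Real.sqrt (p q.1 q.2) * f q.1 i)
      (fun q : X × Y => Real.sqrt (p q.1 q.2) * g q.2 i)
    have hf2 : ∑ q : X × Y, (Real.sqrt (p q.1 q.2) * f q.1 i) ^ 2 = 1 := by
      rw [← Finset.univ_product_univ, Finset.sum_product]
      have hxy : ∀ (x : X) (y : Y), (Real.sqrt (p x y) * f x i) ^ 2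
          = p x y * (f x i * f x i) := by
        intro x y
        rw [mul_pow, Real.sq_sqrt (hp x y)]; ring
      simp_rw [hxy]
      have hx : ∀ x : X, (∑ y, p x y * (f x i * f x i))
          = (∑ y, p x y) * (f x i * f x i) := fun x => (Finset.sum_mul _ _ _).symm
      simp_rw [hx]
      simpa using hfcov i i
    have hg2 : ∑ q : X × Y, (Real.sqrt (p q.1 q.2) * g q.2 i) ^ 2 = 1 := by
      rw [← Finset.univ_product_univ, Finset.sum_product]
      have hxy : ∀ (x : X) (y : Y), (Real.sqrt (p x y) * g y i) ^ 2
          = p x y * (g y i * g y i) := by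
        intro x y
        rw [mul_pow, Real.sq_sqrt (hp x y)]; ring
      simp_rw [hxy]
      rw [Finset.sum_comm]
      have hy : ∀ y : Y, (∑ x, p x y * (g y i * g y i))
          = (∑ x, p x y) * (g y i * g y i) := fun y => (Finset.sum_mul _ _ _).symm
      simp_rw [hy]
      simpa using hgcov i i
    rw [hf2, hg2, Real.sqrt_one, mul_one, h1] at h2
    exact h2
  have part1 : (∑ x, ∑ y, p x y * (∑ i, f x i * g y i)) ≤ (k : ℝ) := by
    rw [hEsum]
    calc ∑ i : Fin k, ∑ x, ∑ y, p x y * (f x i * g y i)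
        ≤ ∑ _i : Fin k, (1 : ℝ) := Finset.sum_le_sum fun i _ => hT i
      _ = (k : ℝ) := by simp
  -- Part 2
  set a : Fin N → Fin k → ℝ := fun n i => ∑ x, u n x * F i x with ha
  set b : Fin N → Fin k → ℝ := fun n i => ∑ y, v n y * G i y with hb
  have hBi : ∀ i, (∑ x, ∑ y, p x y * (f x i * g y i))
      = ∑ n, σ n * (a n i * b n i) := by
    intro i
    have hxy : ∀ (x : X) (y : Y), p x y * (f x i * g y i)
        = (F i x * u₀ x) * (G i y * v₀ y)
          + ∑ n, σ n * ((u n x * F i x) * (v n y * G i y)) := by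
      intro x y
      rw [hpB x y, hBpt x y, mul_add, add_mul]
      congr 1
      · simp only [hF, hG, hu x, hv y]; ring
      · rw [Finset.mul_sum, Finset.sum_mul]
        refine Finset.sum_congr rfl fun n _ => ?_
        simp only [hF, hG]; ring
    simp_rw [hxy, Finset.sum_add_distrib]
    rw [← Finset.sum_mul_sum, hFu i, zero_mul, zero_add]
    have hswap : ∀ x : X, (∑ y, ∑ n, σ n * ((u n x * F i x) * (v n y * G i y)))
        = ∑ n, ∑ y, σ n * ((u n x * F i x) * (v n y * G i y)) := fun _ => Finset.sum_comm
    simp_rw [hswap]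
    rw [Finset.sum_comm]
    refine Finset.sum_congr rfl fun n _ => ?_
    simp only [ha, hb]
    rw [Finset.sum_mul_sum, Finset.mul_sum]
    refine Finset.sum_congr rfl fun x _ => ?_
    rw [Finset.mul_sum]
  have hE2 : (∑ x, ∑ y, p x y * (∑ i, f x i * g y i))
      = ∑ n, σ n * (∑ i, a n i * b n i) := by
    rw [hEsum]
    calc ∑ i : Fin k, ∑ x, ∑ y, p x y * (f x i * g y i)
        = ∑ i : Fin k, ∑ n, σ n * (a n i * b n i) :=
          Finset.sum_congr rfl fun i _ => hBi i
      _ = ∑ n, ∑ i : Fin k, σ n * (a n i * b n i) := Finset.sum_comm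
      _ = ∑ n, σ n * (∑ i, a n i * b n i) :=
          Finset.sum_congr rfl fun n _ => (Finset.mul_sum _ _ _).symm
  have hA1 : ∀ n, (∑ i, (a n i) ^ 2) ≤ 1 := by
    intro n
    have hbes := bessel_sum F hFON (u n)
    have hu2 : (∑ x, (u n x) ^ 2) = 1 := by simpa [sq] using hON_u n n
    rw [hu2] at hbes
    calc ∑ i, (a n i) ^ 2 = ∑ i, (∑ x, F i x * u n x) ^ 2 := by
          refine Finset.sum_congr rfl fun i _ => ?_
          simp only [ha]
          rw [show (∑ x, u n x * F i x) = ∑ x, F i x * u n x from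
            Finset.sum_congr rfl fun x _ => mul_comm _ _]
      _ ≤ 1 := hbes
  have hB1 : ∀ n, (∑ i, (b n i) ^ 2) ≤ 1 := by
    intro n
    have hbes := bessel_sum G hGON (v n)
    have hv2 : (∑ y, (v n y) ^ 2) = 1 := by simpa [sq] using hON_v n n
    rw [hv2] at hbes
    calc ∑ i, (b n i) ^ 2 = ∑ i, (∑ y, G i y * v n y) ^ 2 := by
          refine Finset.sum_congr rfl fun i _ => ?_
          simp only [hb]
          rw [show (∑ y, v n y * G i y) = ∑ y, G i y * v n y from
            Finset.sum_congr rfl fun y _ => mul_comm _ _]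
      _ ≤ 1 := hbes
  have hAk : (∑ n, ∑ i, (a n i) ^ 2) ≤ (k : ℝ) := by
    rw [Finset.sum_comm]
    calc ∑ i : Fin k, ∑ n, (a n i) ^ 2 ≤ ∑ _i : Fin k, (1 : ℝ) := by
          refine Finset.sum_le_sum fun i _ => ?_
          have hbes := bessel_sum u hON_u (F i)
          have hF2 : (∑ x, (F i x) ^ 2) = 1 := by simpa [sq] using hFON i i
          rw [hF2] at hbes
          exact hbes
      _ = (k : ℝ) := by simp
  have hBk : (∑ n, ∑ i, (b n i) ^ 2) ≤ (k : ℝ) := by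
    rw [Finset.sum_comm]
    calc ∑ i : Fin k, ∑ n, (b n i) ^ 2 ≤ ∑ _i : Fin k, (1 : ℝ) := by
          refine Finset.sum_le_sum fun i _ => ?_
          have hbes := bessel_sum v hON_v (G i)
          have hG2 : (∑ y, (G i y) ^ 2) = 1 := by simpa [sq] using hGON i i
          rw [hG2] at hbes
          exact hbes
      _ = (k : ℝ) := by simp
  set w : Fin N → ℝ :=
    fun n => Real.sqrt (∑ i, (a n i) ^ 2) * Real.sqrt (∑ i, (b n i) ^ 2) with hw
  have hw0 : ∀ n, 0 ≤ w n := fun n =>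
    mul_nonneg (Real.sqrt_nonneg _) (Real.sqrt_nonneg _)
  have hw1 : ∀ n, w n ≤ 1 := by
    intro n
    have h1 : Real.sqrt (∑ i, (a n i) ^ 2) ≤ 1 := Real.sqrt_le_one.mpr (hA1 n)
    have h2 : Real.sqrt (∑ i, (b n i) ^ 2) ≤ 1 := Real.sqrt_le_one.mpr (hB1 n)
    have h3 := Real.sqrt_nonneg (∑ i, (a n i) ^ 2)
    have h4 := Real.sqrt_nonneg (∑ i, (b n i) ^ 2)
    simp only [hw]
    nlinarith
  have hcw : ∀ n, (∑ i, a n i * b n i) ≤ w n := fun n =>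
    Real.sum_mul_le_sqrt_mul_sqrt Finset.univ (a n) (b n)
  have hwk : (∑ n, w n) ≤ (k : ℝ) := by
    have h := Real.sum_mul_le_sqrt_mul_sqrt Finset.univ
      (fun n => Real.sqrt (∑ i, (a n i) ^ 2)) (fun n => Real.sqrt (∑ i, (b n i) ^ 2))
    have hsq : ∀ n : Fin N, (Real.sqrt (∑ i, (a n i) ^ 2)) ^ 2 = ∑ i, (a n i) ^ 2 :=
      fun n => Real.sq_sqrt (Finset.sum_nonneg fun i _ => sq_nonneg _)
    have hsq' : ∀ n : Fin N, (Real.sqrt (∑ i, (b n i) ^ 2)) ^ 2 = ∑ i, (b n i) ^ 2 :=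
      fun n => Real.sq_sqrt (Finset.sum_nonneg fun i _ => sq_nonneg _)
    simp_rw [hsq, hsq'] at h
    have hs1 : Real.sqrt (∑ n, ∑ i, (a n i) ^ 2) ≤ Real.sqrt (k : ℝ) :=
      Real.sqrt_le_sqrt hAk
    have hs2 : Real.sqrt (∑ n, ∑ i, (b n i) ^ 2) ≤ Real.sqrt (k : ℝ) :=
      Real.sqrt_le_sqrt hBk
    have hk : Real.sqrt (k : ℝ) * Real.sqrt (k : ℝ) = (k : ℝ) :=
      Real.mul_self_sqrt (Nat.cast_nonneg k)
    calc (∑ n, w n) ≤ Real.sqrt (∑ n, ∑ i, (a n i) ^ 2)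
          * Real.sqrt (∑ n, ∑ i, (b n i) ^ 2) := h
      _ ≤ Real.sqrt (k : ℝ) * Real.sqrt (k : ℝ) := by
          have := Real.sqrt_nonneg (∑ n, ∑ i, (a n i) ^ 2)
          have := Real.sqrt_nonneg (∑ n, ∑ i, (b n i) ^ 2)
          have := Real.sqrt_nonneg ((k : ℝ))
          nlinarith
      _ = (k : ℝ) := hk
  refine ⟨part1, ?_⟩
  calc (∑ x, ∑ y, p x y * (∑ i, f x i * g y i))
      = ∑ n, σ n * (∑ i, a n i * b n i) := hE2
    _ ≤ ∑ n, σ n * w n := Finset.sum_le_sum fun n _ =>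
        mul_le_mul_of_nonneg_left (hcw n) (hσ0 n)
    _ ≤ ∑ i ∈ univ.filter (fun i : Fin N => (i : ℕ) < k), σ i :=
        rearrange_bound σ w hσ0 hσmono hw0 hw1 hwk
end

section
/- The HGR maximal correlation with k features equals the sum of the top k singular values of B̃ = B − u₀v₀ᵀ: ρ^{(k)}(X,Y) = max over zero-mean, identity-covariance f : 𝒳 → ℝᵏ, g : 𝒴 → ℝᵏ of E[f(X)ᵀg(Y)] = Σ_{i=1}^k σᵢ(B̃), provided k ≤ min(|𝒳|,|𝒴|) − 1. -/
/-!
Put `φⱼ = u₀ ⊙ fⱼ` and `ψⱼ = v₀ ⊙ gⱼ`. The constraints say exactly that `φ` and `ψ` are orthonormal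
`k`-frames with `φⱼ ⊥ u₀` and `ψⱼ ⊥ v₀`, and the objective becomes `∑ⱼ φⱼᵀ B ψⱼ`. Since
`u₀ᵀ B = v₀ᵀ` and `B v₀ = u₀`, the matrix `B̃` kills `u₀` on the left and `v₀` on the right, so
every singular pair `(uᵢ, vᵢ)` with `σᵢ ≠ 0` is orthogonal to `(u₀, v₀)`, and on the constraint
set the objective is `∑ⱼ φⱼᵀ B̃ ψⱼ = ∑ᵢ σᵢ ∑ⱼ ⟨φⱼ, uᵢ⟩⟨vᵢ, ψⱼ⟩`.

For the upper bound, `2ac ≤ a² + c²` bounds `∑ⱼ ⟨φⱼ, uᵢ⟩⟨vᵢ, ψⱼ⟩` by a weight `dᵢ`, and Bessel's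
inequality along rows and columns gives `0 ≤ dᵢ ≤ 1` and `∑ᵢ dᵢ ≤ k`; against such weights the
antitone `σ` sums to at most `σ₁ + ⋯ + σₖ`. For attainment, extend `u₀` together with the `uᵢ`,
`i < k`, `σᵢ ≠ 0`, to an orthonormal family of `k + 1 ≤ |𝒳|` vectors, likewise on the `𝒴` side.
-/

open Matrix Finset
open scoped RealInnerProductSpace

section Orthonormal

variable {ι α : Type*} [DecidableEq ι] [Fintype α]

lemma real_inner_toLp_toLp (a b : α → ℝ) :
    ⟪(WithLp.toLp 2 a : EuclideanSpace ℝ α), WithLp.toLp 2 b⟫ = a ⬝ᵥ b := by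
  rw [EuclideanSpace.inner_toLp_toLp, star_trivial, dotProduct_comm]

lemma orthonormal_toLp_iff (e : ι → α → ℝ) :
    Orthonormal ℝ (fun i => (WithLp.toLp 2 (e i) : EuclideanSpace ℝ α)) ↔
      ∀ i j, e i ⬝ᵥ e j = if i = j then 1 else 0 := by
  simp only [orthonormal_iff_ite, real_inner_toLp_toLp]

lemma sum_sq_dotProduct_le [Fintype ι] {e : ι → α → ℝ}
    (he : ∀ i j, e i ⬝ᵥ e j = if i = j then 1 else 0) (w : α → ℝ) :
    ∑ i, (e i ⬝ᵥ w) ^ 2 ≤ w ⬝ᵥ w := by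
  have h := ((orthonormal_toLp_iff e).2 he).sum_inner_products_le
    (WithLp.toLp 2 w : EuclideanSpace ℝ α) (s := univ)
  simpa only [real_inner_toLp_toLp, Real.norm_eq_abs, sq_abs, ← real_inner_self_eq_norm_sq] using h

lemma exists_orthonormal_extension [Fintype ι] {e : ι → α → ℝ} {s : Set ι}
    (he : ∀ i ∈ s, ∀ j ∈ s, e i ⬝ᵥ e j = if i = j then 1 else 0)
    (hcard : Fintype.card ι ≤ Fintype.card α) :
    ∃ w : ι → α → ℝ, (∀ i j, w i ⬝ᵥ w j = if i = j then 1 else 0) ∧ ∀ i ∈ s, w i = e i := by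
  let E : ι ⊕ Fin (Fintype.card α - Fintype.card ι) → EuclideanSpace ℝ α :=
    Sum.elim (fun i => WithLp.toLp 2 (e i)) 0
  have hE : Orthonormal ℝ ((Sum.inl '' s).domRestrict E) := by
    rw [orthonormal_iff_ite]
    rintro ⟨_, i, hi, rfl⟩ ⟨_, j, hj, rfl⟩
    convert he i hi j hj using 2
    · exact real_inner_toLp_toLp _ _
    · exact ⟨fun h => Sum.inl_injective (congrArg Subtype.val h), fun h => h ▸ rfl⟩
  obtain ⟨b, hb⟩ := hE.exists_orthonormalBasis_extension_of_card_eq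
    (by rw [finrank_euclideanSpace, Fintype.card_sum, Fintype.card_fin]; omega)
  refine ⟨fun i => (b (Sum.inl i)).ofLp, fun i j => ?_, fun i hi => ?_⟩
  · rw [← real_inner_toLp_toLp]
    simpa using orthonormal_iff_ite.1 b.orthonormal (Sum.inl i) (Sum.inl j)
  · simp [hb _ (Set.mem_image_of_mem _ hi), E]

end Orthonormal

section Rearrangement

lemma sum_mul_le_sum_of_threshold {ι : Type*} [Fintype ι] {σ d : ι → ℝ} {S : Finset ι} {c : ℝ}
    (hc : 0 ≤ c) (hS : ∀ i ∈ S, c ≤ σ i) (hSc : ∀ i ∉ S, σ i ≤ c)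
    (hd0 : ∀ i, 0 ≤ d i) (hd1 : ∀ i, d i ≤ 1) (hd : ∑ i, d i ≤ #S) :
    ∑ i, σ i * d i ≤ ∑ i ∈ S, σ i := by
  classical
  have key : ∀ i, σ i * d i ≤ (if i ∈ S then σ i - c else 0) + c * d i := by
    intro i
    split_ifs with hi
    · nlinarith [hS i hi, hd1 i]
    · nlinarith [hSc i hi, hd0 i]
  calc ∑ i, σ i * d i ≤ ∑ i, ((if i ∈ S then σ i - c else 0) + c * d i) :=
        sum_le_sum fun i _ => key i
    _ = ∑ i ∈ S, σ i - c * #S + c * ∑ i, d i := by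
        rw [sum_add_distrib, sum_ite_mem, univ_inter, sum_sub_distrib, sum_const, nsmul_eq_mul,
          mul_sum, mul_comm c]
    _ ≤ ∑ i ∈ S, σ i := by nlinarith

variable {N k : ℕ} {σ : Fin N → ℝ}

lemma sum_filter_val_lt_eq_sum_castLE {M : Type*} [AddCommMonoid M] (hkN : k ≤ N)
    (f : Fin N → M) :
    ∑ i ∈ univ.filter (fun i : Fin N => (i : ℕ) < k), f i = ∑ j : Fin k, f (Fin.castLE hkN j) := by
  rw [show ∑ j : Fin k, f (Fin.castLE hkN j) = ∑ i ∈ univ.map (Fin.castLEEmb hkN), f i by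
    rw [sum_map]; rfl]
  congr 1
  ext i
  simp only [mem_filter, mem_univ, true_and, mem_map, Fin.castLEEmb_apply]
  exact ⟨fun h => ⟨⟨i, h⟩, rfl⟩, by rintro ⟨j, rfl⟩; exact j.isLt⟩

lemma sum_mul_le_sum_filter_lt_s14 (hkN : k ≤ N) (hσ0 : ∀ i, 0 ≤ σ i) (hσ : Antitone σ)
    {d : Fin N → ℝ} (hd0 : ∀ i, 0 ≤ d i) (hd1 : ∀ i, d i ≤ 1) (hd : ∑ i, d i ≤ k) :
    ∑ i, σ i * d i ≤ ∑ i ∈ univ.filter (fun i : Fin N => (i : ℕ) < k), σ i := by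
  rcases hkN.lt_or_eq with hk | rfl
  · refine sum_mul_le_sum_of_threshold (hσ0 ⟨k, hk⟩) (fun i hi => hσ ?_) (fun i hi => hσ ?_)
      hd0 hd1 (by rwa [Fin.card_filter_val_lt, min_eq_right hkN])
    · simp only [mem_filter, mem_univ, true_and] at hi
      exact Fin.le_def.2 hi.le
    · simp only [mem_filter, mem_univ, true_and, not_lt] at hi
      exact Fin.le_def.2 hi
  · rw [filter_true_of_mem fun i _ => i.isLt]
    exact sum_le_sum fun i _ => mul_le_of_le_one_right (hσ0 i) (hd1 i)

end Rearrangement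

section SVD

variable {α β : Type*} [Fintype α] [Fintype β] {N k : ℕ} {σ : Fin N → ℝ}
  {u : Fin N → α → ℝ} {v : Fin N → β → ℝ}

lemma dotProduct_sum_smul_vecMulVec_mulVec (a : α → ℝ) (b : β → ℝ) :
    a ⬝ᵥ (∑ i, σ i • vecMulVec (u i) (v i)) *ᵥ b = ∑ i, σ i * ((a ⬝ᵥ u i) * (v i ⬝ᵥ b)) := by
  simp only [sum_mulVec, dotProduct_sum, smul_mulVec, dotProduct_smul, dotProduct_mulVec,
    vecMul_vecMulVec, smul_dotProduct, smul_eq_mul]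

lemma mul_dotProduct_eq_zero_of_mulVec_eq_zero
    (hu : ∀ i j, u i ⬝ᵥ u j = if i = j then 1 else 0) {b : β → ℝ}
    (hb : (∑ i, σ i • vecMulVec (u i) (v i)) *ᵥ b = 0) (i : Fin N) : σ i * (v i ⬝ᵥ b) = 0 := by
  have h := dotProduct_sum_smul_vecMulVec_mulVec (σ := σ) (u := u) (v := v) (u i) b
  simpa [hb, hu] using h.symm

lemma mul_dotProduct_eq_zero_of_vecMul_eq_zero
    (hv : ∀ i j, v i ⬝ᵥ v j = if i = j then 1 else 0) {a : α → ℝ}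
    (ha : a ᵥ* (∑ i, σ i • vecMulVec (u i) (v i)) = 0) (i : Fin N) : σ i * (a ⬝ᵥ u i) = 0 := by
  have h := dotProduct_sum_smul_vecMulVec_mulVec (σ := σ) (u := u) (v := v) a (v i)
  simpa [dotProduct_mulVec, ha, dotProduct_comm _ (v i), hv] using h.symm

theorem sum_sum_mul_dotProduct_le (hkN : k ≤ N) (hσ0 : ∀ i, 0 ≤ σ i) (hσ : Antitone σ)
    (hu : ∀ i j, u i ⬝ᵥ u j = if i = j then 1 else 0)
    (hv : ∀ i j, v i ⬝ᵥ v j = if i = j then 1 else 0)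
    {φ : Fin k → α → ℝ} {ψ : Fin k → β → ℝ}
    (hφ : ∀ i j, φ i ⬝ᵥ φ j = if i = j then 1 else 0)
    (hψ : ∀ i j, ψ i ⬝ᵥ ψ j = if i = j then 1 else 0) :
    ∑ j, ∑ i, σ i * ((φ j ⬝ᵥ u i) * (v i ⬝ᵥ ψ j)) ≤
      ∑ i ∈ univ.filter (fun i : Fin N => (i : ℕ) < k), σ i := by
  have hu_row : ∀ i, ∑ j, (φ j ⬝ᵥ u i) ^ 2 ≤ 1 := fun i =>
    (sum_sq_dotProduct_le hφ (u i)).trans (by simp [hu])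
  have hu_col : ∀ j, ∑ i, (φ j ⬝ᵥ u i) ^ 2 ≤ 1 := fun j => by
    simpa only [dotProduct_comm (φ j), hφ, if_pos] using sum_sq_dotProduct_le hu (φ j)
  have hv_row : ∀ i, ∑ j, (v i ⬝ᵥ ψ j) ^ 2 ≤ 1 := fun i => by
    simpa only [dotProduct_comm (v i), hv, if_pos] using sum_sq_dotProduct_le hψ (v i)
  have hv_col : ∀ j, ∑ i, (v i ⬝ᵥ ψ j) ^ 2 ≤ 1 := fun j =>
    (sum_sq_dotProduct_le hv (ψ j)).trans (by simp [hψ])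
  set d : Fin N → ℝ := fun i => (∑ j, (φ j ⬝ᵥ u i) ^ 2 + ∑ j, (v i ⬝ᵥ ψ j) ^ 2) / 2
  have hcoupling : ∀ i, ∑ j, (φ j ⬝ᵥ u i) * (v i ⬝ᵥ ψ j) ≤ d i := fun i => by
    simp only [d, ← sum_add_distrib, sum_div]
    exact sum_le_sum fun j _ => by linarith [two_mul_le_add_sq (φ j ⬝ᵥ u i) (v i ⬝ᵥ ψ j)]
  have hd : ∑ i, d i ≤ k := by
    have hu_sum := sum_le_sum fun j (_ : j ∈ univ) => hu_col j
    have hv_sum := sum_le_sum fun j (_ : j ∈ univ) => hv_col j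
    simp only [sum_const, card_univ, Fintype.card_fin, nsmul_eq_mul, mul_one] at hu_sum hv_sum
    simp only [d]
    rw [← sum_div, sum_add_distrib, sum_comm, sum_comm (f := fun i j => (v i ⬝ᵥ ψ j) ^ 2)]
    linarith
  calc ∑ j, ∑ i, σ i * ((φ j ⬝ᵥ u i) * (v i ⬝ᵥ ψ j))
      = ∑ i, σ i * ∑ j, (φ j ⬝ᵥ u i) * (v i ⬝ᵥ ψ j) := by
        rw [sum_comm]; simp only [mul_sum]
    _ ≤ ∑ i, σ i * d i := sum_le_sum fun i _ => mul_le_mul_of_nonneg_left (hcoupling i) (hσ0 i)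
    _ ≤ _ := sum_mul_le_sum_filter_lt_s14 hkN hσ0 hσ
        (fun i => by positivity) (fun i => by simp only [d]; linarith [hu_row i, hv_row i]) hd

end SVD

section Frames

variable {α β : Type*} [Fintype α] [Fintype β] {N k : ℕ} {σ : Fin N → ℝ}
  {u : Fin N → α → ℝ} {v : Fin N → β → ℝ}

lemma exists_orthonormal_frame (hkN : k ≤ N) (hkα : k < Fintype.card α) (hσ0 : ∀ i, 0 ≤ σ i)
    (hσ : Antitone σ) (hu : ∀ i j, u i ⬝ᵥ u j = if i = j then 1 else 0) {a : α → ℝ}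
    (ha : a ⬝ᵥ a = 1) (hua : ∀ i, σ i ≠ 0 → u i ⬝ᵥ a = 0) :
    ∃ φ : Fin k → α → ℝ, (∀ j, φ j ⬝ᵥ a = 0) ∧ (∀ i j, φ i ⬝ᵥ φ j = if i = j then 1 else 0) ∧
      ∀ j i, σ i ≠ 0 → φ j ⬝ᵥ u i = if i = Fin.castLE hkN j then 1 else 0 := by
  let e : Option (Fin k) → α → ℝ := fun o => o.elim a fun j => u (Fin.castLE hkN j)
  let s : Set (Option (Fin k)) := {o | ∀ j, o = some j → σ (Fin.castLE hkN j) ≠ 0}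
  have he : ∀ o ∈ s, ∀ o' ∈ s, e o ⬝ᵥ e o' = if o = o' then 1 else 0 := by
    rintro (_ | j) hj (_ | j') hj'
    · simpa [e] using ha
    · simpa [e, dotProduct_comm a] using hua _ (hj' j' rfl)
    · simpa [e] using hua _ (hj j rfl)
    · simp [e, hu, Fin.castLE_inj]
  obtain ⟨w, hw, hws⟩ := exists_orthonormal_extension he (by simpa using hkα)
  have hwu : ∀ j, σ (Fin.castLE hkN j) ≠ 0 → w (some j) = u (Fin.castLE hkN j) :=
    fun j hj => hws (some j) fun _ h => Option.some_inj.1 h ▸ hj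
  refine ⟨fun j => w (some j), fun j => ?_, fun i j => by simpa using hw (some i) (some j),
    fun j i hi => ?_⟩
  · simpa [hws none (by simp [s]), e] using hw (some j) none
  by_cases hj : σ (Fin.castLE hkN j) = 0
  · -- a nonzero `σ i` precedes the vanishing `σ j`, so `u i` is itself one of the frame vectors
    have hij : (i : ℕ) < j := by
      by_contra! h
      exact hi (le_antisymm (hj ▸ hσ (Fin.le_def.2 h)) (hσ0 i))
    have hi' : Fin.castLE hkN ⟨i, by omega⟩ = i := rfl
    rw [← hi', ← hwu _ (hi'.symm ▸ hi), dotProduct_comm, hw]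
    simp [Fin.ext_iff, hij.ne]
  · simp [hwu j hj, hu, eq_comm]

def frameValues (M : Matrix α β ℝ) (a : α → ℝ) (b : β → ℝ) (k : ℕ) : Set ℝ :=
  {r | ∃ φ : Fin k → α → ℝ, ∃ ψ : Fin k → β → ℝ, (∀ j, φ j ⬝ᵥ a = 0) ∧ (∀ j, ψ j ⬝ᵥ b = 0) ∧
    (∀ i j, φ i ⬝ᵥ φ j = if i = j then 1 else 0) ∧
    (∀ i j, ψ i ⬝ᵥ ψ j = if i = j then 1 else 0) ∧ r = ∑ j, φ j ⬝ᵥ M *ᵥ ψ j}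

theorem isGreatest_frameValues {M : Matrix α β ℝ} {a : α → ℝ} {b : β → ℝ} (ha : a ⬝ᵥ a = 1)
    (hb : b ⬝ᵥ b = 1) (haM : a ᵥ* M = b) (hMb : M *ᵥ b = a) (hσ0 : ∀ i, 0 ≤ σ i)
    (hσ : Antitone σ) (hu : ∀ i j, u i ⬝ᵥ u j = if i = j then 1 else 0)
    (hv : ∀ i j, v i ⬝ᵥ v j = if i = j then 1 else 0)
    (hSVD : M - vecMulVec a b = ∑ i, σ i • vecMulVec (u i) (v i))
    (hkN : k ≤ N) (hkα : k < Fintype.card α) (hkβ : k < Fintype.card β) :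
    IsGreatest (frameValues M a b k) (∑ i ∈ univ.filter (fun i : Fin N => (i : ℕ) < k), σ i) := by
  have hM : ∀ φ ψ, φ ⬝ᵥ a = 0 → φ ⬝ᵥ M *ᵥ ψ = ∑ i, σ i * ((φ ⬝ᵥ u i) * (v i ⬝ᵥ ψ)) :=
    fun φ ψ hφ => by
      rw [← dotProduct_sum_smul_vecMulVec_mulVec, ← hSVD, sub_mulVec, dotProduct_sub,
        dotProduct_mulVec φ (vecMulVec a b), vecMul_vecMulVec, hφ, zero_smul, zero_dotProduct,
        sub_zero]
  have hua : ∀ i, σ i ≠ 0 → u i ⬝ᵥ a = 0 := fun i hi => by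
    have h := mul_dotProduct_eq_zero_of_vecMul_eq_zero hv
      (by rw [← hSVD, vecMul_sub, vecMul_vecMulVec, haM, ha, one_smul, sub_self]) i
    rw [dotProduct_comm]
    exact (mul_eq_zero.1 h).resolve_left hi
  have hvb : ∀ i, σ i ≠ 0 → v i ⬝ᵥ b = 0 := fun i hi => by
    have h := mul_dotProduct_eq_zero_of_mulVec_eq_zero hu
      (by rw [← hSVD, sub_mulVec, vecMulVec_mulVec, hMb, hb]; simp) i
    exact (mul_eq_zero.1 h).resolve_left hi
  refine ⟨?_, ?_⟩
  · obtain ⟨φ, hφa, hφ, hφu⟩ := exists_orthonormal_frame hkN hkα hσ0 hσ hu ha hua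
    obtain ⟨ψ, hψb, hψ, hψv⟩ := exists_orthonormal_frame hkN hkβ hσ0 hσ hv hb hvb
    refine ⟨φ, ψ, hφa, hψb, hφ, hψ, ?_⟩
    rw [sum_filter_val_lt_eq_sum_castLE hkN]
    refine sum_congr rfl fun j _ => ?_
    have hterm : ∀ i, σ i * ((φ j ⬝ᵥ u i) * (v i ⬝ᵥ ψ j)) =
        if i = Fin.castLE hkN j then σ i else 0 := fun i => by
      by_cases hi : σ i = 0
      · simp [hi]
      · rw [hφu j i hi, dotProduct_comm, hψv j i hi]
        split_ifs <;> simp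
    simp [hM _ _ (hφa j), hterm]
  · rintro r ⟨φ, ψ, hφa, -, hφ, hψ, rfl⟩
    simp only [hM _ _ (hφa _)]
    exact sum_sum_mul_dotProduct_le hkN hσ0 hσ hu hv hφ hψ

end Frames

section HGR

variable {X Y : Type*}

def hgrValues [Fintype X] [Fintype Y] (p : X → Y → ℝ) (k : ℕ) : Set ℝ :=
  {r | ∃ f : X → Fin k → ℝ, ∃ g : Y → Fin k → ℝ,
    (∀ i, ∑ x, (∑ y, p x y) * f x i = 0) ∧
    (∀ i, ∑ y, (∑ x, p x y) * g y i = 0) ∧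
    (∀ i j, (∑ x, (∑ y, p x y) * (f x i * f x j)) = if i = j then 1 else 0) ∧
    (∀ i j, (∑ y, (∑ x, p x y) * (g y i * g y j)) = if i = j then 1 else 0) ∧
    r = ∑ x, ∑ y, p x y * (∑ i, f x i * g y i)}

lemma sum_mul_eq_dotProduct {α : Type*} [Fintype α] {w P : α → ℝ} (hw : ∀ x, w x * w x = P x)
    (h : α → ℝ) : ∑ x, P x * h x = (fun x => w x * h x) ⬝ᵥ w :=
  sum_congr rfl fun x _ => by rw [← hw]; ring

lemma sum_mul_mul_eq_dotProduct {α : Type*} [Fintype α] {w P : α → ℝ}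
    (hw : ∀ x, w x * w x = P x) (h h' : α → ℝ) :
    ∑ x, P x * (h x * h' x) = (fun x => w x * h x) ⬝ᵥ fun x => w x * h' x :=
  sum_congr rfl fun x _ => by rw [← hw]; ring

variable {p : X → Y → ℝ} {B : Matrix X Y ℝ} {u₀ : X → ℝ} {v₀ : Y → ℝ}

lemma sum_sum_mul_eq_sum_dotProduct_mulVec [Fintype X] [Fintype Y]
    (hpB : ∀ x y, p x y = u₀ x * B x y * v₀ y) {k : ℕ} (f : X → Fin k → ℝ) (g : Y → Fin k → ℝ) :
    ∑ x, ∑ y, p x y * ∑ i, f x i * g y i =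
      ∑ i, (fun x => u₀ x * f x i) ⬝ᵥ B *ᵥ fun y => v₀ y * g y i := by
  simp only [dotProduct, mulVec, hpB, mul_sum]
  conv_rhs => rw [sum_comm]
  refine sum_congr rfl fun x _ => ?_
  rw [sum_comm]
  exact sum_congr rfl fun i _ => sum_congr rfl fun y _ => by ring

lemma vecMul_eq_of_mul_mul [Fintype X] (hv₀ : ∀ y, 0 < v₀ y)
    (hv₀p : ∀ y, v₀ y * v₀ y = ∑ x, p x y) (hpB : ∀ x y, p x y = u₀ x * B x y * v₀ y) :
    u₀ ᵥ* B = v₀ := by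
  funext y
  refine mul_right_cancel₀ (hv₀ y).ne' ?_
  simp only [vecMul, dotProduct, sum_mul, ← hpB, hv₀p]

lemma mulVec_eq_of_mul_mul [Fintype Y] (hu₀ : ∀ x, 0 < u₀ x)
    (hu₀p : ∀ x, u₀ x * u₀ x = ∑ y, p x y) (hpB : ∀ x y, p x y = u₀ x * B x y * v₀ y) :
    B *ᵥ v₀ = u₀ := by
  funext x
  refine mul_left_cancel₀ (hu₀ x).ne' ?_
  simp only [mulVec, dotProduct, mul_sum, ← mul_assoc, ← hpB, hu₀p]

lemma hgrValues_eq_frameValues [Fintype X] [Fintype Y] (hu₀ : ∀ x, 0 < u₀ x)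
    (hv₀ : ∀ y, 0 < v₀ y) (hu₀p : ∀ x, u₀ x * u₀ x = ∑ y, p x y)
    (hv₀p : ∀ y, v₀ y * v₀ y = ∑ x, p x y) (hpB : ∀ x y, p x y = u₀ x * B x y * v₀ y) (k : ℕ) :
    hgrValues p k = frameValues B u₀ v₀ k := by
  simp only [hgrValues, sum_mul_mul_eq_dotProduct hu₀p, sum_mul_mul_eq_dotProduct hv₀p]
  simp only [sum_mul_eq_dotProduct hu₀p, sum_mul_eq_dotProduct hv₀p,
    sum_sum_mul_eq_sum_dotProduct_mulVec hpB]
  ext r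
  refine ⟨fun ⟨f, g, h⟩ => ⟨fun i x => u₀ x * f x i, fun i y => v₀ y * g y i, h⟩,
    fun ⟨φ, ψ, h⟩ => ⟨fun x i => φ i x / u₀ x, fun y i => ψ i y / v₀ y, ?_⟩⟩
  have hφ : ∀ x t, u₀ x * (t / u₀ x) = t := fun x t => mul_div_cancel₀ t (hu₀ x).ne'
  have hψ : ∀ y t, v₀ y * (t / v₀ y) = t := fun y t => mul_div_cancel₀ t (hv₀ y).ne'
  simpa only [hφ, hψ] using h

end HGR

theorem hgr_k_eq_sum_top_singular_values_general
    {X Y : Type*} [Fintype X] [Fintype Y] {k N : ℕ}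
    (p : X → Y → ℝ) (hsum : ∑ x, ∑ y, p x y = 1)
    (hX : ∀ x, 0 < ∑ y, p x y) (hY : ∀ y, 0 < ∑ x, p x y)
    (B : Matrix X Y ℝ)
    (hB : ∀ x y, B x y = p x y / (Real.sqrt (∑ y', p x y') * Real.sqrt (∑ x', p x' y)))
    (u₀ : X → ℝ) (hu : ∀ x, u₀ x = Real.sqrt (∑ y, p x y))
    (v₀ : Y → ℝ) (hv : ∀ y, v₀ y = Real.sqrt (∑ x, p x y))
    (σ : Fin N → ℝ) (u : Fin N → X → ℝ) (v : Fin N → Y → ℝ)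
    (hσ0 : ∀ i, 0 ≤ σ i) (hσmono : Antitone σ)
    (hON_u : ∀ i j, (∑ x, u i x * u j x) = if i = j then 1 else 0)
    (hON_v : ∀ i j, (∑ y, v i y * v j y) = if i = j then 1 else 0)
    (hSVD : B - vecMulVec u₀ v₀ = ∑ i, σ i • vecMulVec (u i) (v i))
    (hkN : k ≤ N)
    (hk : k ≤ min (Fintype.card X) (Fintype.card Y) - 1) :
    IsGreatest {r : ℝ | ∃ f : X → Fin k → ℝ, ∃ g : Y → Fin k → ℝ,
        (∀ i, ∑ x, (∑ y, p x y) * f x i = 0) ∧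
        (∀ i, ∑ y, (∑ x, p x y) * g y i = 0) ∧
        (∀ i j, (∑ x, (∑ y, p x y) * (f x i * f x j)) = if i = j then 1 else 0) ∧
        (∀ i j, (∑ y, (∑ x, p x y) * (g y i * g y j)) = if i = j then 1 else 0) ∧
        r = ∑ x, ∑ y, p x y * (∑ i, f x i * g y i)}
      (∑ i ∈ univ.filter (fun i : Fin N => (i : ℕ) < k), σ i) := by
  have hu₀ : ∀ x, 0 < u₀ x := fun x => hu x ▸ Real.sqrt_pos.2 (hX x)
  have hv₀ : ∀ y, 0 < v₀ y := fun y => hv y ▸ Real.sqrt_pos.2 (hY y)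
  have hu₀p : ∀ x, u₀ x * u₀ x = ∑ y, p x y := fun x => hu x ▸ Real.mul_self_sqrt (hX x).le
  have hv₀p : ∀ y, v₀ y * v₀ y = ∑ x, p x y := fun y => hv y ▸ Real.mul_self_sqrt (hY y).le
  have hpB : ∀ x y, p x y = u₀ x * B x y * v₀ y := fun x y => by
    rw [hB, ← hu, ← hv]
    field_simp [(hu₀ x).ne', (hv₀ y).ne']
  have hu₀u₀ : u₀ ⬝ᵥ u₀ = 1 := (sum_congr rfl fun x _ => hu₀p x).trans hsum
  have hv₀v₀ : v₀ ⬝ᵥ v₀ = 1 := (sum_congr rfl fun y _ => hv₀p y).trans (sum_comm.trans hsum)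
  obtain ⟨x, -⟩ := nonempty_of_sum_ne_zero (hsum ▸ one_ne_zero : ∑ x, ∑ y, p x y ≠ 0)
  obtain ⟨y, -⟩ := nonempty_of_sum_ne_zero (hX x).ne'
  have hXpos := Fintype.card_pos_iff.2 ⟨x⟩
  have hYpos := Fintype.card_pos_iff.2 ⟨y⟩
  rw [← hgrValues, hgrValues_eq_frameValues hu₀ hv₀ hu₀p hv₀p hpB]
  exact isGreatest_frameValues hu₀u₀ hv₀v₀ (vecMul_eq_of_mul_mul hv₀ hv₀p hpB)
    (mulVec_eq_of_mul_mul hu₀ hu₀p hpB) hσ0 hσmono hON_u hON_v hSVD hkN (by omega) (by omega)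

/-- The HGR maximal correlation with `k` features equals the sum of the top `k`
singular values of `B̃ = B - u₀v₀ᵀ`: the maximum of `E[f(X)ᵀ g(Y)]` over zero-mean,
identity-covariance `f : 𝒳 → ℝᵏ`, `g : 𝒴 → ℝᵏ` is attained and equals `∑_{i=1}^k σᵢ(B̃)`,
provided `k ≤ min(|𝒳|, |𝒴|) - 1`.  The SVD of `B̃` is given via the orthonormal families
`u`, `v` and nonincreasing nonnegative `σ`. -/
theorem hgr_k_eq_sum_top_singular_values
    {X Y : Type*} [Fintype X] [Fintype Y] {k N : ℕ}
    (p : X → Y → ℝ) (hp : ∀ x y, 0 ≤ p x y) (hsum : ∑ x, ∑ y, p x y = 1)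
    (hX : ∀ x, 0 < ∑ y, p x y) (hY : ∀ y, 0 < ∑ x, p x y)
    (B : Matrix X Y ℝ)
    (hB : ∀ x y, B x y = p x y / (Real.sqrt (∑ y', p x y') * Real.sqrt (∑ x', p x' y)))
    (u₀ : X → ℝ) (hu : ∀ x, u₀ x = Real.sqrt (∑ y, p x y))
    (v₀ : Y → ℝ) (hv : ∀ y, v₀ y = Real.sqrt (∑ x, p x y))
    (σ : Fin N → ℝ) (u : Fin N → X → ℝ) (v : Fin N → Y → ℝ)
    (hσ0 : ∀ i, 0 ≤ σ i) (hσmono : Antitone σ)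
    (hON_u : ∀ i j, (∑ x, u i x * u j x) = if i = j then 1 else 0)
    (hON_v : ∀ i j, (∑ y, v i y * v j y) = if i = j then 1 else 0)
    (hSVD : B - vecMulVec u₀ v₀ = ∑ i, σ i • vecMulVec (u i) (v i))
    (hkN : k ≤ N)
    (hk : k ≤ min (Fintype.card X) (Fintype.card Y) - 1) :
    IsGreatest {r : ℝ | ∃ f : X → Fin k → ℝ, ∃ g : Y → Fin k → ℝ,
        (∀ i, ∑ x, (∑ y, p x y) * f x i = 0) ∧
        (∀ i, ∑ y, (∑ x, p x y) * g y i = 0) ∧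
        (∀ i j, (∑ x, (∑ y, p x y) * (f x i * f x j)) = if i = j then 1 else 0) ∧
        (∀ i j, (∑ y, (∑ x, p x y) * (g y i * g y j)) = if i = j then 1 else 0) ∧
        r = ∑ x, ∑ y, p x y * (∑ i, f x i * g y i)}
      (∑ i ∈ univ.filter (fun i : Fin N => (i : ℕ) < k), σ i) :=
  hgr_k_eq_sum_top_singular_values_general p hsum hX hY B hB u₀ hu v₀ hv σ u v hσ0 hσmono hON_u
    hON_v hSVD hkN hk
end
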